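/- arXiv:2005.12859 — 2 statements merged into one kernel-verified Lean document; each statement's English description precedes it below -/
import Mathlib

section
/- With p(λ) = (4/λ)(1 - √(1 + 5λ²/8)), for all λ with 0 < λ ≤ 0.6 one has 1 + λ·p(λ) - p(λ)² > 0. -/
open Real

theorem stmt8 (p : ℝ → ℝ)
    (hp : ∀ l : ℝ, p l = (4 / l) * (1 - Real.sqrt (1 + 5 * l ^ 2 / 8))) :
    ∀ l : ℝ, 0 < l → l ≤ 0.6 → 0 < 1 + l * p l - (p l) ^ 2 := by
  intro l hl hl6
  have hl2 : l ^ 2 ≤ 0.36 := by nlinarith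
  set s := Real.sqrt (1 + 5 * l ^ 2 / 8) with hs
  have hs2 : s ^ 2 = 1 + 5 * l ^ 2 / 8 := Real.sq_sqrt (by nlinarith)
  have hsnn : 0 ≤ s := Real.sqrt_nonneg _
  have hs1 : 1 < s := by nlinarith
  have key : 0 < l ^ 2 + 4 * l ^ 2 * (1 - s) - 16 * (1 - s) ^ 2 := by
    nlinarith [mul_pos (sub_pos.2 hs1) (sub_pos.2 hs1), sq_nonneg (s - 1), sq_nonneg l]
  have hlne : l ≠ 0 := ne_of_gt hl
  have heq : 1 + l * p l - (p l) ^ 2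
      = (l ^ 2 + 4 * l ^ 2 * (1 - s) - 16 * (1 - s) ^ 2) / l ^ 2 := by
    rw [hp l, ← hs]
    field_simp
    ring
  rw [heq]
  exact div_pos key (by positivity)
end

section
/- For s > 2 and ω_c > 0, the dephasing rate γ(t) = (1+(ω_c t)²)^{-s/2} · Γ(s) · sin(s·arctan(ω_c t)) takes strictly negative values for some t > 0; indeed γ(t) < 0 whenever π/s < arctan(ω_c t) < min(2π/s, π/2), and such t exist iff s > 2. -/
open Real

lemma sin_neg_of_pi_lt' (x : ℝ) (h1 : π < x) (h2 : x < 2 * π) : Real.sin x < 0 := by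
  have h : 0 < Real.sin (x - π) :=
    Real.sin_pos_of_pos_of_lt_pi (by linarith) (by linarith)
  have h' : Real.sin ((x - π) + π) = -Real.sin (x - π) := Real.sin_add_pi _
  have hx : x - π + π = x := by ring
  rw [hx] at h'
  linarith

lemma exists_t (ωc : ℝ) (hωc : 0 < ωc) (s : ℝ) (hs : 2 < s) :
    ∃ t : ℝ, 0 < t ∧ π / s < Real.arctan (ωc * t) ∧
      Real.arctan (ωc * t) < min (2 * π / s) (π / 2) := by
  have hs0 : 0 < s := by linarith
  have hps : 0 < π / s := div_pos Real.pi_pos hs0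
  have hlt1 : π / s < 2 * π / s := by
    rw [div_lt_div_iff₀ hs0 hs0]
    nlinarith [Real.pi_pos]
  have hlt2 : π / s < π / 2 := div_lt_div_of_pos_left Real.pi_pos (by norm_num) hs
  have hmin : π / s < min (2 * π / s) (π / 2) := lt_min hlt1 hlt2
  set θ := (π / s + min (2 * π / s) (π / 2)) / 2 with hθdef
  have hθ1 : π / s < θ := by simp only [hθdef]; linarith
  have hθ2 : θ < min (2 * π / s) (π / 2) := by simp only [hθdef]; linarith
  have hθpos : 0 < θ := lt_trans hps hθ1
  have hθhalf : θ < π / 2 := lt_of_lt_of_le hθ2 (min_le_right _ _)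
  have htan : 0 < Real.tan θ := Real.tan_pos_of_pos_of_lt_pi_div_two hθpos hθhalf
  refine ⟨Real.tan θ / ωc, div_pos htan hωc, ?_, ?_⟩ <;>
  · have heq : ωc * (Real.tan θ / ωc) = Real.tan θ := by field_simp
    rw [heq, Real.arctan_tan (by linarith [Real.pi_pos]) hθhalf]
    assumption

theorem stmt12 (ωc : ℝ) (hωc : 0 < ωc)
    (γ : ℝ → ℝ → ℝ)
    (hγ : ∀ s t : ℝ, γ s t =
      (1 + (ωc * t) ^ 2) ^ (-(s / 2)) * Real.Gamma s *
        Real.sin (s * Real.arctan (ωc * t))) :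
    (∀ s : ℝ, 2 < s →
      (∀ t : ℝ, 0 < t →
        π / s < Real.arctan (ωc * t) →
        Real.arctan (ωc * t) < min (2 * π / s) (π / 2) → γ s t < 0) ∧
      (∃ t : ℝ, 0 < t ∧ γ s t < 0)) ∧
    (∀ s : ℝ, 0 < s →
      ((∃ t : ℝ, 0 < t ∧ π / s < Real.arctan (ωc * t) ∧
          Real.arctan (ωc * t) < min (2 * π / s) (π / 2)) ↔ 2 < s)) := by
  have key : ∀ s t : ℝ, 2 < s → 0 < t → π / s < Real.arctan (ωc * t) →
      Real.arctan (ωc * t) < min (2 * π / s) (π / 2) → γ s t < 0 := by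
    intro s t hs ht h1 h2
    have hs0 : 0 < s := by linarith
    set θ := Real.arctan (ωc * t)
    have hπ : π < s * θ := by
      rw [div_lt_iff₀ hs0] at h1; linarith [mul_comm θ s]
    have h2' : θ < 2 * π / s := lt_of_lt_of_le h2 (min_le_left _ _)
    have h2π : s * θ < 2 * π := by
      rw [lt_div_iff₀ hs0] at h2'; linarith [mul_comm θ s]
    have hsin : Real.sin (s * θ) < 0 := sin_neg_of_pi_lt' _ hπ h2π
    have hpow : (0:ℝ) < (1 + (ωc * t) ^ 2) ^ (-(s / 2)) :=
      Real.rpow_pos_of_pos (by positivity) _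
    have hΓ : 0 < Real.Gamma s := Real.Gamma_pos_of_pos hs0
    rw [hγ]
    exact mul_neg_of_pos_of_neg (mul_pos hpow hΓ) hsin
  constructor
  · intro s hs
    refine ⟨fun t => key s t hs, ?_⟩
    obtain ⟨t, ht, h1, h2⟩ := exists_t ωc hωc s hs
    exact ⟨t, ht, key s t hs ht h1 h2⟩
  · intro s hs0
    constructor
    · rintro ⟨t, ht, h1, h2⟩
      have h2' : Real.arctan (ωc * t) < π / 2 := lt_of_lt_of_le h2 (min_le_right _ _)
      have : π / s < π / 2 := lt_trans h1 h2'
      rw [div_lt_div_iff₀ hs0 (by norm_num)] at this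
      nlinarith [Real.pi_pos]
    · exact exists_t ωc hωc s
end
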